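/- Let n ≥ 2, k ≥ 1, and let φ be a permutation of W_n^k. Define the permutation ψ of W_n^{k+1} by ψ = (id_1 × φ)(φ^{-1} × id_1). Then for every r ≥ 1 one has ψ^{(r)} = (id_r × φ)(φ^{-1} × id_r) as permutations of W_n^{k+r}, and in particular ψ^{(k)} = φ^{-1} × φ as permutations of W_n^{2k}. -/

import Mathlib

def wordSplit (n a b c : ℕ) (h : a + b = c) :
    (Fin c → Fin n) ≃ (Fin a → Fin n) × (Fin b → Fin n) :=
  (Equiv.arrowCongr (finCongr h.symm) (Equiv.refl (Fin n))).trans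
    ((Equiv.arrowCongr finSumFinEquiv.symm (Equiv.refl (Fin n))).trans
      (Equiv.sumArrowEquivProdArrow _ _ _))

/-- The permutation `φ × ρ` of words of length `c = a + b`: `φ` acts on the first `a` letters
and `ρ` on the last `b` letters. -/
def prodPerm (n a b c : ℕ) (h : a + b = c) (φ : Equiv.Perm (Fin a → Fin n))
    (ρ : Equiv.Perm (Fin b → Fin n)) : Equiv.Perm (Fin c → Fin n) :=
  ((wordSplit n a b c h).trans (φ.prodCongr ρ)).trans (wordSplit n a b c h).symm

/-- `phiIter φ r` is the permutation `φ^{(r+1)} = (id_r × φ)(id_{r-1} × φ × id_1)⋯(φ × id_r)`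
of words of length `k + r` (the rightmost factor acting first). -/
def phiIter {n k : ℕ} (φ : Equiv.Perm (Fin k → Fin n)) :
    (r : ℕ) → Equiv.Perm (Fin (k + r) → Fin n)
  | 0 => φ
  | r + 1 =>
      (prodPerm n (k + r) 1 (k + (r + 1)) (by omega) (phiIter φ r) (Equiv.refl _)).trans
        (prodPerm n (r + 1) k (k + (r + 1)) (by omega) (Equiv.refl _) φ)

/-!
Write `P_j φ` for `φ` acting on the `k` letters in positions `j, …, j + k - 1`. Then
`ψ = P_1 φ · P_0 φ⁻¹`, and the recursion `ψ^{(r+2)} = P_{r+1} ψ · P_0 ψ^{(r+1)}` gives inductively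
`ψ^{(r+2)} = P_{r+2} φ · P_{r+1} φ⁻¹ · P_{r+1} φ · P_0 φ⁻¹ = P_{r+2} φ · P_0 φ⁻¹`:
the products telescope.
-/

open Function Set

namespace Function.Embedding

variable {ι κ μ α : Type*}

lemma funext_of_comp_eq (e : ι ↪ κ) {w w' : κ → α} (h : w ∘ e = w' ∘ e)
    (h' : ∀ i ∉ range e, w i = w' i) : w = w' := by
  funext i
  by_cases hi : i ∈ range e
  · obtain ⟨a, rfl⟩ := hi
    exact congrFun h a
  · exact h' i hi

/-- Applies `φ` to the subword `w ∘ e`, leaving the letters outside `range e` unchanged. -/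
noncomputable def permAlong (e : ι ↪ κ) (φ : Equiv.Perm (ι → α)) : Equiv.Perm (κ → α) where
  toFun w := extend e (φ (w ∘ e)) w
  invFun w := extend e (φ.symm (w ∘ e)) w
  left_inv w := e.funext_of_comp_eq (by simp [extend_comp e.injective])
    fun i hi => by simp [extend_apply' _ _ _ hi]
  right_inv w := e.funext_of_comp_eq (by simp [extend_comp e.injective])
    fun i hi => by simp [extend_apply' _ _ _ hi]

variable (e : ι ↪ κ) (φ ψ : Equiv.Perm (ι → α)) (w : κ → α)

lemma permAlong_apply_comp : permAlong e φ w ∘ e = φ (w ∘ e) :=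
  extend_comp e.injective _ _

lemma permAlong_apply_of_notMem {i : κ} (hi : i ∉ range e) : permAlong e φ w i = w i :=
  extend_apply' _ _ _ hi

lemma permAlong_apply_comp_of_disjoint {f : μ ↪ κ} (h : Disjoint (range e) (range f)) :
    permAlong e φ w ∘ f = w ∘ f :=
  funext fun b => permAlong_apply_of_notMem e φ w (h.symm.notMem_of_mem_left (mem_range_self b))

@[simp]
lemma permAlong_one : permAlong e (1 : Equiv.Perm (ι → α)) = 1 := by
  ext w : 1
  exact e.funext_of_comp_eq (permAlong_apply_comp e 1 w) fun _ => permAlong_apply_of_notMem e 1 w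

lemma permAlong_mul : permAlong e (φ * ψ) = permAlong e φ * permAlong e ψ := by
  ext w : 1
  refine e.funext_of_comp_eq ?_ fun i hi => ?_
  · simp only [Equiv.Perm.mul_apply, permAlong_apply_comp]
  · simp only [Equiv.Perm.mul_apply, permAlong_apply_of_notMem e _ _ hi]

lemma permAlong_permAlong (f : κ ↪ μ) :
    permAlong f (permAlong e φ) = permAlong (e.trans f) φ := by
  ext w : 1
  refine (e.trans f).funext_of_comp_eq ?_ fun i hi => ?_
  · rw [permAlong_apply_comp, coe_trans, ← comp_assoc, permAlong_apply_comp, permAlong_apply_comp,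
      comp_assoc]
  · rw [permAlong_apply_of_notMem _ _ _ hi]
    by_cases hf : i ∈ range f
    · obtain ⟨b, rfl⟩ := hf
      have hb : b ∉ range e := fun ⟨a, ha⟩ => hi ⟨a, by simp [ha]⟩
      exact (congrFun (permAlong_apply_comp f _ w) b).trans (permAlong_apply_of_notMem e φ _ hb)
    · exact permAlong_apply_of_notMem f _ w hf

end Function.Embedding

namespace Fin

def blockEmb {k c : ℕ} (j : ℕ) (h : j + k ≤ c) : Fin k ↪ Fin c :=
  ⟨fun t => ⟨j + t, by omega⟩, fun s t hst => Fin.ext (by simpa using hst)⟩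

@[simp]
lemma val_blockEmb {k c : ℕ} (j : ℕ) (h : j + k ≤ c) (t : Fin k) : (blockEmb j h t : ℕ) = j + t :=
  rfl

lemma blockEmb_trans {k d c : ℕ} {j j' : ℕ} (h : j + k ≤ d) (h' : j' + d ≤ c) :
    (blockEmb j h).trans (blockEmb j' h') = blockEmb (j' + j) (by omega) := by
  ext t
  simp [Nat.add_assoc]

lemma disjoint_range_blockEmb {k k' c j j' : ℕ} (h : j + k ≤ c) (h' : j' + k' ≤ c)
    (hjj' : j + k ≤ j') : Disjoint (range (blockEmb j h)) (range (blockEmb j' h')) := by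
  rw [Set.disjoint_left]
  rintro _ ⟨s, rfl⟩ ⟨t, hst⟩
  have := congrArg Fin.val hst
  simp only [val_blockEmb] at this
  omega

end Fin

open Function.Embedding

lemma wordSplit_apply {n a b c : ℕ} (h : a + b = c) (w : Fin c → Fin n) :
    wordSplit n a b c h w = (w ∘ Fin.blockEmb 0 (by omega), w ∘ Fin.blockEmb a (by omega)) := by
  refine Prod.ext (funext fun i => congrArg w (Fin.ext ?_))
    (funext fun i => congrArg w (Fin.ext ?_)) <;> simp

lemma prodPerm_eq {n a b c : ℕ} (h : a + b = c) (φ : Equiv.Perm (Fin a → Fin n))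
    (ρ : Equiv.Perm (Fin b → Fin n)) :
    prodPerm n a b c h φ ρ
      = (Fin.blockEmb a (by omega)).permAlong ρ * (Fin.blockEmb 0 (by omega)).permAlong φ := by
  have hdisj := Fin.disjoint_range_blockEmb (k := a) (k' := b) (c := c) (j := 0) (j' := a)
    (by omega) (by omega) (by omega)
  ext w : 1
  rw [prodPerm, Equiv.trans_apply, Equiv.trans_apply, Equiv.symm_apply_eq, wordSplit_apply,
    wordSplit_apply, Equiv.prodCongr_apply, Prod.map_apply, Equiv.Perm.mul_apply,
    permAlong_apply_comp_of_disjoint _ _ _ hdisj.symm, permAlong_apply_comp, permAlong_apply_comp,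
    permAlong_apply_comp_of_disjoint _ _ _ hdisj]

lemma phiIter_succ {n k : ℕ} (φ : Equiv.Perm (Fin k → Fin n)) (r : ℕ) :
    phiIter φ (r + 1) = prodPerm n (r + 1) k (k + (r + 1)) (by omega) 1 φ *
      prodPerm n (k + r) 1 (k + (r + 1)) (by omega) (phiIter φ r) 1 :=
  rfl

lemma phiIter_conj_eq {n k : ℕ} (φ : Equiv.Perm (Fin k → Fin n)) (r : ℕ) :
    phiIter ((prodPerm n 1 k (k + 1) (Nat.add_comm 1 k) (Equiv.refl _) φ) *
        (prodPerm n k 1 (k + 1) rfl φ.symm (Equiv.refl _))) r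
      = (Fin.blockEmb (r + 1) (by omega)).permAlong φ *
        (Fin.blockEmb 0 (by omega)).permAlong φ.symm := by
  induction r with
  | zero =>
    simp only [phiIter, prodPerm_eq, ← Equiv.Perm.one_def, permAlong_one, mul_one, one_mul]
  | succ r ih =>
    rw [phiIter_succ, ih]
    simp only [prodPerm_eq, ← Equiv.Perm.one_def, permAlong_one, mul_one, one_mul, permAlong_mul,
      permAlong_permAlong, Fin.blockEmb_trans, Nat.add_zero, Nat.zero_add]
    rw [mul_assoc, ← mul_assoc (permAlong _ φ.symm), ← permAlong_mul, ← Equiv.Perm.inv_def,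
      inv_mul_cancel, permAlong_one, one_mul]

/-- For `ψ = (id_1 × φ)(φ⁻¹ × id_1)` one has `ψ^{(r)} = (id_r × φ)(φ⁻¹ × id_r)` for all `r ≥ 1`
(here `phiIter ψ r = ψ^{(r+1)}`), and in particular `ψ^{(k)} = φ⁻¹ × φ`. -/
theorem stmt_8 {n : ℕ} {k : ℕ} (hk : 1 ≤ k)
    (φ : Equiv.Perm (Fin k → Fin n)) :
    (∀ r : ℕ,
      phiIter ((prodPerm n 1 k (k + 1) (Nat.add_comm 1 k) (Equiv.refl _) φ) *
          (prodPerm n k 1 (k + 1) rfl φ.symm (Equiv.refl _))) r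
        = (prodPerm n (r + 1) k ((k + 1) + r) (by omega) (Equiv.refl _) φ) *
          (prodPerm n k (r + 1) ((k + 1) + r) (by omega) φ.symm (Equiv.refl _))) ∧
    phiIter ((prodPerm n 1 k (k + 1) (Nat.add_comm 1 k) (Equiv.refl _) φ) *
        (prodPerm n k 1 (k + 1) rfl φ.symm (Equiv.refl _))) (k - 1)
      = prodPerm n k k ((k + 1) + (k - 1)) (by omega) φ.symm φ := by
  refine ⟨fun r => ?_, ?_⟩
  · rw [phiIter_conj_eq]
    simp only [prodPerm_eq, ← Equiv.Perm.one_def, permAlong_one, mul_one, one_mul]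
  · rw [phiIter_conj_eq, prodPerm_eq]
    congr 3
    omega
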